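/- Let α, β, N be real numbers with α ∉ {−1,−2,−3,…}. Then for every integer n ≥ 0 the identity Σ_{j=0}^{n} R_j^{α,β,N}(λ) = R_n^{α,β,N−1}(λ) holds in ℝ[λ]. -/

import Mathlib

open Polynomial Finset

noncomputable section

/-- Pochhammer symbol `(a)_k = a(a+1)⋯(a+k−1)`. -/
def poch (a : ℝ) (k : ℕ) : ℝ := ∏ i ∈ Finset.range k, (a + i)

/-- The quadratic lattice `λ^{α,β}(x) = x(x+α+β+1)`. -/
def lam (α β x : ℝ) : ℝ := x * (x + α + β + 1)

/-- The dual Hahn polynomial `R_n^{α,β,N}`. -/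
def dualHahn (α β N : ℝ) (n : ℕ) : Polynomial ℝ :=
  Polynomial.C ((n.factorial : ℝ))⁻¹ *
    ∑ j ∈ Finset.range (n + 1),
      Polynomial.C ((-1 : ℝ) ^ j * poch (-(n : ℝ)) j * poch (-N + j) (n - j)
          / (poch (α + 1) j * (j.factorial : ℝ))) *
        ∏ i ∈ Finset.range j, (Polynomial.X - Polynomial.C ((i : ℝ) * (α + β + 1 + i)))

/-- Dual Hahn polynomial with integer index; `R_k = 0` for `k < 0`. -/
def dualHahnZ (α β N : ℝ) (k : ℤ) : Polynomial ℝ :=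
  if 0 ≤ k then dualHahn α β N k.toNat else 0

/-- The Hahn polynomial `h_n^{α,β,N}` evaluated at `x`. -/
def hahn (α β N : ℝ) (n : ℕ) (x : ℝ) : ℝ :=
  ∑ j ∈ Finset.range (n + 1),
    poch (-(n : ℝ)) j * poch ((n : ℝ) + α + β + 1) j * poch (-N + j) (n - j) *
      poch (α + j + 1) (n - j) * poch (-x) j / (j.factorial : ℝ)

/-- The dual Hahn weight `w_{*;α,β,N}(x)`. -/
def dualHahnWeight (α β : ℝ) (N : ℕ) (x : ℕ) : ℝ :=
  (2 * (x : ℝ) + α + β + 1) * poch (α + 1) x * poch (-(N : ℝ)) x * (N.factorial : ℝ) /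
    ((-1 : ℝ) ^ x * poch ((x : ℝ) + α + β + 1) (N + 1) * poch (β + 1) x * (x.factorial : ℝ))

/-! In the basis `∏_{i<j} (λ - i(α+β+1+i))`, scaled by `((α+1)_j j!)⁻¹`, the `j`-th coefficient of
`R_n^{α,β,N}` is `(-N+j)_{n-j} / (n-j)!`. Hence `R_{n+1}^{α,β,N-1} = R_n^{α,β,N-1} + R_{n+1}^{α,β,N}` is
Pascal's rule for these rising binomial coefficients, and the identity follows by induction on `n`. -/

open scoped Nat

lemma poch_succ (a : ℝ) (k : ℕ) : poch a (k + 1) = poch a k * (a + k) :=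
  prod_range_succ _ _

lemma poch_succ_eq_mul_poch_add_one (a : ℝ) (k : ℕ) : poch a (k + 1) = a * poch (a + 1) k := by
  rw [poch, prod_range_succ', poch]
  simp only [Nat.cast_add, Nat.cast_one, Nat.cast_zero, add_zero, mul_comm a, add_assoc,
    add_comm (1 : ℝ)]

lemma neg_one_pow_mul_poch_neg_natCast {n j : ℕ} (h : j ≤ n) :
    (-1) ^ j * poch (-n) j = n.descFactorial j := by
  have hprod : poch (-n) j = ∏ i ∈ range j, (-1) * ((n - i : ℕ) : ℝ) :=
    prod_congr rfl fun i hi => by rw [Nat.cast_sub (by grind)]; ring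
  rw [hprod, prod_mul_distrib, prod_const, card_range, ← mul_assoc, ← pow_add,
    Even.neg_one_pow ⟨j, rfl⟩, one_mul, Nat.descFactorial_eq_prod_range, Nat.cast_prod]

/-- Pascal's rule for `(a)_m / m! = choose (a + m - 1) m`. -/
lemma poch_div_factorial_add_one_succ (a : ℝ) (m : ℕ) :
    poch (a + 1) (m + 1) / (m + 1)! = poch (a + 1) m / m ! + poch a (m + 1) / (m + 1)! := by
  rw [poch_succ, poch_succ_eq_mul_poch_add_one, Nat.factorial_succ]
  push_cast
  field_simp
  ring

def dualHahnTerm (α β : ℝ) (j : ℕ) : ℝ[X] :=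
  C (poch (α + 1) j * j !)⁻¹ * ∏ i ∈ range j, (X - C ((i : ℝ) * (α + β + 1 + i)))

lemma dualHahn_eq_sum_smul (α β N : ℝ) (n : ℕ) :
    dualHahn α β N n =
      ∑ j ∈ range (n + 1), (poch (-N + j) (n - j) / (n - j)!) • dualHahnTerm α β j := by
  rw [dualHahn, mul_sum]
  refine sum_congr rfl fun j hj => ?_
  have hjn : j ≤ n := Nat.lt_succ_iff.mp (mem_range.mp hj)
  have hdesc : (n ! : ℝ)⁻¹ * ((-1) ^ j * poch (-n) j) = ((n - j)! : ℝ)⁻¹ := by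
    rw [neg_one_pow_mul_poch_neg_natCast hjn, ← Nat.factorial_mul_descFactorial hjn, Nat.cast_mul,
      mul_inv, mul_assoc, inv_mul_cancel₀ (by exact_mod_cast (Nat.descFactorial_pos.mpr hjn).ne'),
      mul_one]
  rw [dualHahnTerm, smul_eq_C_mul, ← mul_assoc, ← mul_assoc, ← C_mul, ← C_mul]
  congr 2
  rw [div_eq_mul_inv, div_eq_mul_inv]
  linear_combination (poch (-N + j) (n - j) * (poch (α + 1) j * j !)⁻¹) * hdesc

lemma dualHahn_sub_one_succ (α β N : ℝ) (n : ℕ) :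
    dualHahn α β (N - 1) (n + 1) = dualHahn α β (N - 1) n + dualHahn α β N (n + 1) := by
  simp only [dualHahn_eq_sum_smul]
  rw [sum_range_succ _ (n + 1), sum_range_succ _ (n + 1), ← add_assoc, ← sum_add_distrib]
  congr 1
  · refine sum_congr rfl fun j hj => ?_
    have hjn : n + 1 - j = n - j + 1 := by grind
    rw [hjn, ← add_smul, show -(N - 1) + j = (-N + j) + 1 by ring, poch_div_factorial_add_one_succ]
  · simp [poch]

theorem dualHahn_sum_identity_general (α β N : ℝ) (n : ℕ) :
    ∑ j ∈ Finset.range (n + 1), dualHahn α β N j = dualHahn α β (N - 1) n := by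
  induction n with
  | zero => simp [dualHahn_eq_sum_smul, poch]
  | succ n ih => rw [sum_range_succ, ih, dualHahn_sub_one_succ]

/-- Summation identity for dual Hahn polynomials: `Σ_{j=0}^n R_j^{α,β,N} = R_n^{α,β,N−1}`. -/
theorem dualHahn_sum_identity (α β N : ℝ) (hα : ∀ k : ℕ, α ≠ -1 - k) (n : ℕ) :
    ∑ j ∈ Finset.range (n + 1), dualHahn α β N j = dualHahn α β (N - 1) n :=
  dualHahn_sum_identity_general α β N n

end
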